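/- (Correctness of coupling from the past.) Suppose the random maps preserve π and that almost surely there exists t ≥ 1 such that f_t ∘ ⋯ ∘ f_1 is a constant function. Then for any fixed x₀ ∈ S, the almost-sure limit W := lim_{t→∞} (f_1 ∘ f_2 ∘ ⋯ ∘ f_t)(x₀) has law π. -/

import Mathlib

open MeasureTheory ProbabilityTheory Filter

noncomputable section

variable {Ω S : Type*}

/-- Forward composition of the random maps with indices `1, …, t`:
`fwdComp f t ω = f t ω ∘ ⋯ ∘ f 1 ω`. -/
def fwdComp (f : ℕ → Ω → S → S) : ℕ → Ω → S → S
  | 0 => fun _ => id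
  | n + 1 => fun ω => f (n + 1) ω ∘ fwdComp f n ω

/-- Backward composition of the random maps with indices `1, …, t`:
`bwdComp f t ω = f 1 ω ∘ f 2 ω ∘ ⋯ ∘ f t ω`. -/
def bwdComp (f : ℕ → Ω → S → S) : ℕ → Ω → S → S
  | 0 => fun _ => id
  | n + 1 => fun ω => bwdComp f n ω ∘ f (n + 1) ω

/-- A function is constant. -/
def IsConstMap (S : Type*) (g : S → S) : Prop := ∃ c, g = Function.const S c

/-- A probability measure `π` on `S` is preserved by a random map with law `ν`
(a measure on `S → S`) if applying an independent `ν`-distributed map to a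
`π`-distributed state yields a `π`-distributed state. -/
def PreservesMeasure {S : Type*} [MeasurableSpace S]
    (ν : Measure (S → S)) (π : Measure S) : Prop :=
  Measure.map (fun p : (S → S) × S => p.1 p.2) (ν.prod π) = π

/-!
Reversing the order of the first `t` maps does not change their joint law, so the backward
composition `f 1 ∘ ⋯ ∘ f t` is constant with the same probability as the forward one
`f t ∘ ⋯ ∘ f 1`. Hence almost surely the backward composition becomes constant, and from then
on it no longer changes, since precomposing a constant map does nothing.

Being a composition of independent `π`-preserving maps, `f 1 ∘ ⋯ ∘ f t` preserves `π`: applied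
to an independent `π`-distributed point it produces a `π`-distributed point for every `t`.
These points are eventually equal to `W`, so `W` has law `π`.
-/

lemma identDistrib_precomp_of_injective {ι β : Type*} [MeasurableSpace Ω] [MeasurableSpace β]
    {μ : Measure Ω} [IsProbabilityMeasure μ] {f : ι → Ω → β} {i₀ : ι}
    (hmeas : ∀ i, Measurable (f i)) (hindep : iIndepFun f μ)
    (hident : ∀ i, IdentDistrib (f i) (f i₀) μ μ) {ρ : ι → ι} (hρ : ρ.Injective) :
    IdentDistrib (fun ω i => f (ρ i) ω) (fun ω i => f i ω) μ μ where
  aemeasurable_fst := (measurable_pi_iff.2 fun i => hmeas (ρ i)).aemeasurable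
  aemeasurable_snd := (measurable_pi_iff.2 hmeas).aemeasurable
  map_eq := by
    rw [(hindep.precomp hρ).map_fun_eq_infinitePi_map fun i => hmeas (ρ i),
      hindep.map_fun_eq_infinitePi_map hmeas]
    simp only [(hident _).map_eq]

lemma ae_exists_mem_of_measure_eq [MeasurableSpace Ω] {μ : Measure Ω} [IsFiniteMeasure μ]
    {A B : ℕ → Set Ω} (hA : ∀ n, MeasurableSet (A n)) (hB : ∀ n, MeasurableSet (B n))
    (hBmono : Monotone B) (hAB : ∀ n, μ (A n) = μ (B n)) (h : ∀ᵐ ω ∂μ, ∃ n, ω ∈ B n) :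
    ∀ᵐ ω ∂μ, ∃ n, ω ∈ A n := by
  simp only [← Set.mem_iUnion] at h ⊢
  rw [ae_mem_iff_measure_eq (MeasurableSet.iUnion hA).nullMeasurableSet]
  rw [ae_mem_iff_measure_eq (MeasurableSet.iUnion hB).nullMeasurableSet] at h
  refine le_antisymm (measure_mono (Set.subset_univ _)) ?_
  calc μ Set.univ = μ (⋃ n, B n) := h.symm
    _ = ⨆ n, μ (A n) := by simp only [hBmono.measure_iUnion, hAB]
    _ ≤ μ (⋃ n, A n) := iSup_le fun n => measure_mono (Set.subset_iUnion A n)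

section EventualLimit

variable {α β : Type*} [MeasurableSpace α] [MeasurableSpace β] {μ : Measure α}

lemma exists_measurable_ae_eventually_eq [Countable β] [MeasurableSingletonClass β] [Nonempty β]
    {u : ℕ → α → β} (hu : ∀ n, Measurable (u n))
    (h : ∀ᵐ a ∂μ, ∃ b, ∀ᶠ n in atTop, u n a = b) :
    ∃ W : α → β, Measurable W ∧ ∀ᵐ a ∂μ, ∀ᶠ n in atTop, u n a = W a := by
  classical
  set E : β → Set α := fun b => {a | ∀ᶠ n in atTop, u n a = b}
  have hE : ∀ b, MeasurableSet (E b) := fun b => by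
    simp only [E, eventually_atTop, Set.ofPred_exists, Set.ofPred_forall]
    exact .iUnion fun N => .iInter fun n => .iInter fun _ => hu n (measurableSet_singleton b)
  have hE_unique : ∀ a b c, a ∈ E b → a ∈ E c → b = c := fun a b c hb hc =>
    ((hb.and hc).exists.elim fun _ h => h.1.symm.trans h.2)
  set W : α → β := fun a => if h : ∃ b, a ∈ E b then h.choose else Classical.arbitrary β
  have hW : ∀ a b, a ∈ E b → W a = b := fun a b hb => by
    have h : ∃ b, a ∈ E b := ⟨b, hb⟩
    simp only [W, dif_pos h]
    exact hE_unique a _ _ h.choose_spec hb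
  refine ⟨W, measurable_to_countable' fun b => ?_, h.mono fun a ⟨b, hb⟩ => hW a b hb ▸ hb⟩
  have hpre : W ⁻¹' {b} = E b ∪ ((⋃ c, E c)ᶜ ∩ {_a | Classical.arbitrary β = b}) := by
    ext a
    by_cases ha : ∃ c, a ∈ E c
    · obtain ⟨c, hc⟩ := ha
      simp only [Set.mem_preimage, Set.mem_singleton_iff, hW a c hc, Set.mem_union,
        Set.mem_inter_iff, Set.mem_compl_iff, Set.mem_iUnion, not_exists]
      exact ⟨fun h => Or.inl (h ▸ hc),
        fun h => h.elim (hE_unique a c b hc) fun h => (h.1 c hc).elim⟩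
    · simp only [W, Set.mem_preimage, Set.mem_singleton_iff, Set.mem_union,
        Set.mem_inter_iff, Set.mem_compl_iff, Set.mem_iUnion, ha, not_false_eq_true, true_and,
        Set.mem_ofPred_eq]
      exact ⟨Or.inr, fun h => h.resolve_left fun hb => ha ⟨b, hb⟩⟩
  rw [hpre]
  exact (hE b).union ((MeasurableSet.iUnion hE).compl.inter (MeasurableSet.const _))

lemma map_eq_of_ae_eventually_eq [IsFiniteMeasure μ] {X : ℕ → α → β} {Y : α → β}
    {ν : Measure β} (hX : ∀ n, Measurable (X n)) (hY : Measurable Y)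
    (h : ∀ᵐ a ∂μ, ∀ᶠ n in atTop, X n a = Y a) (hlaw : ∀ n, μ.map (X n) = ν) :
    μ.map Y = ν := by
  ext s hs
  rw [Measure.map_apply hY hs]
  refine tendsto_nhds_unique (tendsto_measure_of_ae_tendsto_indicator_of_isFiniteMeasure atTop
    (hY hs) (fun n => hX n hs) ?_) ?_
  · filter_upwards [h] with a ha
    filter_upwards [ha] with n hn
    rw [Set.mem_preimage, Set.mem_preimage, hn]
  · simp only [← Measure.map_apply (hX _) hs, hlaw]
    exact tendsto_const_nhds

end EventualLimit

section Compositions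

lemma fwdComp_succ (f : ℕ → Ω → S → S) (ω : Ω) (t : ℕ) :
    fwdComp f (t + 1) ω = f (t + 1) ω ∘ fwdComp f t ω := rfl

lemma bwdComp_succ (f : ℕ → Ω → S → S) (ω : Ω) (t : ℕ) :
    bwdComp f (t + 1) ω = bwdComp f t ω ∘ f (t + 1) ω := rfl

lemma fwdComp_succ' (f : ℕ → Ω → S → S) (ω : Ω) (t : ℕ) :
    fwdComp f (t + 1) ω = fwdComp (fun n => f (n + 1)) t ω ∘ f 1 ω := by
  induction t with
  | zero => rfl
  | succ t ih => rw [fwdComp_succ, ih, fwdComp_succ]; rfl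

lemma fwdComp_congr {f g : ℕ → Ω → S → S} {ω : Ω} {t : ℕ}
    (h : ∀ n ∈ Finset.Icc 1 t, f n ω = g n ω) : fwdComp f t ω = fwdComp g t ω := by
  induction t with
  | zero => rfl
  | succ t ih =>
    rw [fwdComp_succ, fwdComp_succ, h (t + 1) (by simp),
      ih fun n hn => h n (Finset.Icc_subset_Icc_right t.le_succ hn)]

lemma bwdComp_eq_fwdComp_reverse (f : ℕ → Ω → S → S) (ω : Ω) (t : ℕ) :
    bwdComp f t ω = fwdComp (fun n => f (t + 1 - n)) t ω := by
  induction t with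
  | zero => rfl
  | succ t ih =>
    rw [bwdComp_succ, fwdComp_succ', ih]
    simp only [Nat.add_sub_add_right, Nat.add_sub_cancel]

lemma fwdComp_eq_fwdComp_eval (f : ℕ → Ω → S → S) (ω : Ω) (t : ℕ) :
    fwdComp f t ω = fwdComp (fun n (u : ℕ → S → S) => u n) t (fun n => f n ω) := by
  induction t with
  | zero => rfl
  | succ t ih => rw [fwdComp_succ, fwdComp_succ, ih]

lemma IsConstMap.comp_left {g : S → S} (hg : IsConstMap S g) (h : S → S) :
    IsConstMap S (h ∘ g) := by
  obtain ⟨c, rfl⟩ := hg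
  exact ⟨h c, rfl⟩

lemma IsConstMap.comp_right {g : S → S} (hg : IsConstMap S g) (h : S → S) : g ∘ h = g := by
  obtain ⟨c, rfl⟩ := hg
  rfl

lemma isConstMap_fwdComp_mono {f : ℕ → Ω → S → S} {ω : Ω} {t s : ℕ}
    (ht : IsConstMap S (fwdComp f t ω)) (hts : t ≤ s) : IsConstMap S (fwdComp f s ω) := by
  induction s, hts using Nat.le_induction with
  | base => exact ht
  | succ s _ ih => exact ih.comp_left _

lemma bwdComp_eq_of_isConstMap {f : ℕ → Ω → S → S} {ω : Ω} {t s : ℕ}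
    (ht : IsConstMap S (bwdComp f t ω)) (hts : t ≤ s) : bwdComp f s ω = bwdComp f t ω := by
  induction s, hts using Nat.le_induction with
  | base => rfl
  | succ s _ ih => rw [bwdComp_succ, ih, ht.comp_right]

end Compositions

section FiniteState

variable [Finite S] [MeasurableSpace S] [MeasurableSingletonClass S] {π : Measure S}

lemma measurable_comp_pair : Measurable (fun p : (S → S) × (S → S) => p.1 ∘ p.2) :=
  Measurable.of_discrete

lemma measurable_fwdComp {m : MeasurableSpace Ω} {f : ℕ → Ω → S → S} {t : ℕ}
    (hf : ∀ n ≤ t, Measurable[m] (f n)) : Measurable[m] (fwdComp f t) := by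
  induction t with
  | zero => exact measurable_const
  | succ t ih =>
    exact measurable_comp_pair.comp ((hf _ le_rfl).prodMk (ih fun n hn => hf n (by omega)))

lemma measurable_bwdComp {m : MeasurableSpace Ω} {f : ℕ → Ω → S → S} {t : ℕ}
    (hf : ∀ n ≤ t, Measurable[m] (f n)) : Measurable[m] (bwdComp f t) := by
  induction t with
  | zero => exact measurable_const
  | succ t ih =>
    exact measurable_comp_pair.comp ((ih fun n hn => hf n (by omega)).prodMk (hf _ le_rfl))

lemma measurableSet_isConstMap : MeasurableSet {g : S → S | IsConstMap S g} :=
  MeasurableSet.of_discrete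

lemma measurable_eval_pair : Measurable (fun p : (S → S) × S => p.1 p.2) :=
  Measurable.of_discrete

lemma preservesMeasure_dirac_id [SFinite π] : PreservesMeasure (Measure.dirac id) π := by
  rw [PreservesMeasure, Measure.dirac_prod,
    Measure.map_map measurable_eval_pair measurable_prodMk_left]
  exact Measure.map_id

lemma PreservesMeasure.comp {ν₁ ν₂ : Measure (S → S)} [SFinite ν₁] [SFinite ν₂] [SFinite π]
    (h₁ : PreservesMeasure ν₁ π) (h₂ : PreservesMeasure ν₂ π) :
    PreservesMeasure (Measure.map (fun p : (S → S) × (S → S) => p.1 ∘ p.2) (ν₁.prod ν₂)) π := by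
  have hassoc := (measurePreserving_prodAssoc ν₁ ν₂ π).map_eq
  have hprod := Measure.map_prod_map (ν₁.prod ν₂) π measurable_comp_pair measurable_id
  rw [Measure.map_id] at hprod
  calc Measure.map (fun p : (S → S) × S => p.1 p.2)
        ((Measure.map (fun p : (S → S) × (S → S) => p.1 ∘ p.2) (ν₁.prod ν₂)).prod π)
      = Measure.map ((fun p : (S → S) × S => p.1 p.2) ∘ Prod.map id (fun p => p.1 p.2))
          (Measure.map MeasurableEquiv.prodAssoc ((ν₁.prod ν₂).prod π)) := by
        rw [hprod, Measure.map_map measurable_eval_pair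
          (measurable_comp_pair.prodMap measurable_id), Measure.map_map
          (measurable_eval_pair.comp (measurable_id.prodMap measurable_eval_pair))
          MeasurableEquiv.prodAssoc.measurable]
        rfl
    _ = Measure.map (fun p : (S → S) × S => p.1 p.2)
          (ν₁.prod (Measure.map (fun p : (S → S) × S => p.1 p.2) (ν₂.prod π))) := by
        rw [hassoc, ← Measure.map_map measurable_eval_pair
          (measurable_id.prodMap measurable_eval_pair), ← Measure.map_prod_map _ _ measurable_id
          measurable_eval_pair, Measure.map_id]
    _ = π := by rw [h₂, h₁]

lemma PreservesMeasure.map_prod_apply [MeasurableSpace Ω] {μ : Measure Ω} [SFinite μ] [SFinite π]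
    {g : Ω → S → S} (hg : Measurable g) (h : PreservesMeasure (μ.map g) π) :
    (μ.prod π).map (fun p => g p.1 p.2) = π := by
  have hprod := Measure.map_prod_map μ π hg measurable_id
  rw [Measure.map_id] at hprod
  rwa [PreservesMeasure, hprod,
    Measure.map_map measurable_eval_pair (hg.prodMap measurable_id)] at h

end FiniteState

section IID

variable [Finite S] [MeasurableSpace S] [MeasurableSingletonClass S] [MeasurableSpace Ω]
  {μ : Measure Ω} {f : ℕ → Ω → S → S}

lemma indepFun_bwdComp_succ (hmeas : ∀ n, Measurable (f n)) (hindep : iIndepFun f μ) (t : ℕ) :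
    IndepFun (bwdComp f t) (f (t + 1)) μ := by
  have h := indep_iSup_of_disjoint (fun n => (hmeas n).comap_le)
    ((iIndepFun_iff_iIndep _ _ _).1 hindep) (S := Set.Iic t) (T := {t + 1}) (by simp)
  rw [IndepFun_iff_Indep]
  refine indep_of_indep_of_le_right (indep_of_indep_of_le_left h ?_)
    (le_iSup₂_of_le (t + 1) rfl le_rfl)
  exact (measurable_bwdComp fun n hn =>
    (comap_measurable (f n)).mono (le_iSup₂_of_le n (Set.mem_Iic.2 hn) le_rfl) le_rfl).comap_le

lemma preservesMeasure_map_bwdComp [IsProbabilityMeasure μ] (hmeas : ∀ n, Measurable (f n))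
    (hindep : iIndepFun f μ) (hident : ∀ n, IdentDistrib (f n) (f 1) μ μ)
    {π : Measure S} [SFinite π] (hπ : PreservesMeasure (μ.map (f 1)) π) (t : ℕ) :
    PreservesMeasure (μ.map (bwdComp f t)) π := by
  induction t with
  | zero =>
    rw [show bwdComp f 0 = fun _ => id from rfl, Measure.map_const, measure_univ, one_smul]
    exact preservesMeasure_dirac_id
  | succ t ih =>
    have hbwd := measurable_bwdComp (t := t) fun n _ => hmeas n
    have hpair : μ.map (bwdComp f (t + 1))
        = (μ.map fun ω => (bwdComp f t ω, f (t + 1) ω)).map fun p => p.1 ∘ p.2 := by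
      rw [Measure.map_map measurable_comp_pair (hbwd.prodMk (hmeas _))]
      rfl
    rw [hpair, (indepFun_bwdComp_succ hmeas hindep t).map_prod_eq_prod_map_map hbwd.aemeasurable
      (hmeas _).aemeasurable, (hident (t + 1)).map_eq]
    exact ih.comp hπ

lemma measure_isConstMap_bwdComp_eq_fwdComp [IsProbabilityMeasure μ]
    (hmeas : ∀ n, Measurable (f n)) (hindep : iIndepFun f μ)
    (hident : ∀ n, IdentDistrib (f n) (f 1) μ μ) (t : ℕ) :
    μ {ω | IsConstMap S (bwdComp f t ω)} = μ {ω | IsConstMap S (fwdComp f t ω)} := by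
  set ρ : ℕ → ℕ := fun n => if n ∈ Finset.Icc 1 t then t + 1 - n else n
  have hρ : ρ.Injective := by
    intro a b h
    simp only [ρ, Finset.mem_Icc] at h
    split_ifs at h <;> omega
  set A := {u : ℕ → S → S | IsConstMap S (fwdComp (fun n u => u n) t u)}
  have hA : MeasurableSet A :=
    measurable_fwdComp (fun n _ => measurable_pi_apply n) measurableSet_isConstMap
  have hbwd : {ω | IsConstMap S (bwdComp f t ω)} = (fun ω n => f (ρ n) ω) ⁻¹' A := by
    ext ω
    rw [Set.mem_ofPred_eq, Set.mem_preimage, Set.mem_ofPred_eq, bwdComp_eq_fwdComp_reverse,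
      ← fwdComp_eq_fwdComp_eval (fun n ω => f (ρ n) ω)]
    refine Eq.to_iff (congrArg _ (fwdComp_congr fun n hn => ?_))
    simp only [ρ, if_pos hn]
  have hfwd : {ω | IsConstMap S (fwdComp f t ω)} = (fun ω n => f n ω) ⁻¹' A := by
    ext ω
    rw [Set.mem_ofPred_eq, Set.mem_preimage, Set.mem_ofPred_eq, fwdComp_eq_fwdComp_eval]
  rw [hbwd, hfwd, (identDistrib_precomp_of_injective hmeas hindep hident hρ).measure_mem_eq hA]

end IID

theorem stmt3_general [MeasureSpace Ω] [IsProbabilityMeasure (ℙ : Measure Ω)]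
    [Fintype S] [MeasurableSpace S] [MeasurableSingletonClass S]
    (f : ℕ → Ω → S → S) (hmeas : ∀ n, Measurable (f n))
    (hindep : iIndepFun f ℙ)
    (hident : ∀ n, IdentDistrib (f n) (f 1) ℙ ℙ)
    (π : Measure S) [IsProbabilityMeasure π]
    (hπ : PreservesMeasure (Measure.map (f 1) ℙ) π)
    (hcoal : ∀ᵐ ω ∂ℙ, ∃ t, 1 ≤ t ∧ IsConstMap S (fwdComp f t ω))
    (x₀ : S) :
    ∃ W : Ω → S,
      (∀ᵐ ω ∂ℙ, ∀ᶠ t in atTop, bwdComp f t ω x₀ = W ω) ∧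
      Measure.map W ℙ = π := by
  have : Nonempty S := ⟨x₀⟩
  have hbwd : ∀ t, Measurable (bwdComp f t) := fun t => measurable_bwdComp fun n _ => hmeas n
  have hcoal_bwd : ∀ᵐ ω ∂ℙ, ∃ t, IsConstMap S (bwdComp f t ω) :=
    ae_exists_mem_of_measure_eq (fun t => hbwd t measurableSet_isConstMap)
      (fun t => measurable_fwdComp (fun n _ => hmeas n) measurableSet_isConstMap)
      (fun _ _ hts _ hω => isConstMap_fwdComp_mono hω hts)
      (measure_isConstMap_bwdComp_eq_fwdComp hmeas hindep hident)
      (hcoal.mono fun _ ⟨t, _, ht⟩ => ⟨t, ht⟩)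
  have hlim : ∀ᵐ ω ∂ℙ, ∃ c, ∀ᶠ t in atTop, bwdComp f t ω = Function.const S c :=
    hcoal_bwd.mono fun ω ⟨t, c, hc⟩ => ⟨c, eventually_atTop.2
      ⟨t, fun _ hts => (bwdComp_eq_of_isConstMap ⟨c, hc⟩ hts).trans hc⟩⟩
  obtain ⟨W, hW, hWlim⟩ := exists_measurable_ae_eventually_eq
    (u := fun t ω => bwdComp f t ω x₀) (fun t => (measurable_pi_apply x₀).comp (hbwd t))
    (hlim.mono fun _ ⟨c, hc⟩ => ⟨c, hc.mono fun _ ht => congrFun ht x₀⟩)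
  refine ⟨W, hWlim, ?_⟩
  have hlimW : ∀ᵐ ω ∂ℙ, ∀ᶠ t in atTop, bwdComp f t ω = Function.const S (W ω) := by
    filter_upwards [hlim, hWlim] with ω ⟨c, hc⟩ hWω
    filter_upwards [hc, hWω] with t hct hWt
    rw [← hWt, hct]
    rfl
  calc Measure.map W ℙ = Measure.map (fun p => W p.1) ((ℙ : Measure Ω).prod π) := by
        rw [← Function.comp_def, ← Measure.map_map hW measurable_fst, Measure.map_fst_prod,
          measure_univ, one_smul]
    _ = π := map_eq_of_ae_eventually_eq
        (fun t => measurable_eval_pair.comp ((hbwd t).prodMap measurable_id))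
        (hW.comp measurable_fst)
        (Measure.quasiMeasurePreserving_fst.ae hlimW |>.mono fun p hp =>
          hp.mono fun _ ht => congrFun ht p.2)
        fun t => (preservesMeasure_map_bwdComp hmeas hindep hident hπ t).map_prod_apply (hbwd t)

/-- Correctness of coupling from the past: if the i.i.d. random maps
preserve `π`, and almost surely some forward composition `f t ∘ ⋯ ∘ f 1` is constant,
then for any fixed `x₀ ∈ S` the almost-sure limit `W = lim_t (f 1 ∘ ⋯ ∘ f t) x₀`
has law `π`. -/
theorem stmt3 [MeasureSpace Ω] [IsProbabilityMeasure (ℙ : Measure Ω)]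
    [Fintype S] [Nonempty S] [MeasurableSpace S] [MeasurableSingletonClass S]
    (f : ℕ → Ω → S → S) (hmeas : ∀ n, Measurable (f n))
    (hindep : iIndepFun f ℙ)
    (hident : ∀ n, IdentDistrib (f n) (f 1) ℙ ℙ)
    (π : Measure S) [IsProbabilityMeasure π]
    (hπ : PreservesMeasure (Measure.map (f 1) ℙ) π)
    (hcoal : ∀ᵐ ω ∂ℙ, ∃ t, 1 ≤ t ∧ IsConstMap S (fwdComp f t ω))
    (x₀ : S) :
    ∃ W : Ω → S,
      (∀ᵐ ω ∂ℙ, ∀ᶠ t in atTop, bwdComp f t ω x₀ = W ω) ∧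
      Measure.map W ℙ = π :=
  stmt3_general f hmeas hindep hident π hπ hcoal x₀
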